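/- arXiv:2404.17295 — 2 statements merged into one kernel-verified Lean document; each statement's English description precedes it below -/
import Mathlib

section
/- M,X ⊨_D ∀x φ if and only if M,X[M/x] ⊨_D φ, for every dependence logic formula φ with FV(∀x φ) ⊆ dom(X). -/
set_option linter.unusedSectionVars false

namespace Paper

/-- A first-order vocabulary (signature): function and relation symbols with arities. -/
structure Sig where
  Func : Type
  arF : Func → ℕ
  Rel : Type
  arR : Rel → ℕ

/-- A τ-structure with universe `α`. -/
structure Struc (σ : Sig) (α : Type) where
  interpF : (f : σ.Func) → (Fin (σ.arF f) → α) → α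
  interpR : (r : σ.Rel) → (Fin (σ.arR r) → α) → Prop

/-- First-order terms; variables are natural numbers. -/
inductive Term (σ : Sig) where
  | var : ℕ → Term σ
  | func : (f : σ.Func) → (Fin (σ.arF f) → Term σ) → Term σ

/-- Interpretation of a term under an assignment. -/
def Term.eval {σ : Sig} {α : Type} (𝕄 : Struc σ α) (s : ℕ → α) : Term σ → α
  | .var x => s x
  | .func f ts => 𝕄.interpF f (fun i => (ts i).eval 𝕄 s)

/-- Variables occurring in a term. -/
def Term.fv {σ : Sig} : Term σ → Finset ℕ
  | .var x => {x}
  | .func _ ts => Finset.univ.biUnion fun i => (ts i).fv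

/-- A team: a finite set of variables (the domain) together with a set of assignments.
Assignments are encoded as total functions `ℕ → α` that take the value `default`
outside the domain of the team (so that an assignment `s : dom(X) → M` is identified
with its extension by `default`). -/
structure Team (α : Type) [Inhabited α] where
  dom : Finset ℕ
  assignments : Set (ℕ → α)
  supported : ∀ s ∈ assignments, ∀ y ∉ dom, s y = default

variable {σ : Sig} {α : Type} [Inhabited α]

/-- The team `∃x X`: domain `dom(X) \ {x}`, consisting of all (supported) `s` such that
`s[a/x] ∈ X` for some `a` (which subsumes the clause "or `s ∈ X`" in the encoding). -/
def Team.eexists (x : ℕ) (X : Team α) : Team α where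
  dom := X.dom.erase x
  assignments := {s | (∀ y ∉ X.dom.erase x, s y = default) ∧
    ∃ a : α, Function.update s x a ∈ X.assignments}
  supported := fun _ hs => hs.1

/-- The team `∀x X`: domain `dom(X) \ {x}`, consisting of all (supported) `s` such that
`s[a/x] ∈ X` for all `a ∈ M` (when `x ∈ dom(X)`), or `s ∈ X` (when `x ∉ dom(X)`). -/
def Team.eforall (x : ℕ) (X : Team α) : Team α where
  dom := X.dom.erase x
  assignments := {s | (∀ y ∉ X.dom.erase x, s y = default) ∧
    if x ∈ X.dom then ∀ a : α, Function.update s x a ∈ X.assignments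
    else s ∈ X.assignments}
  supported := fun _ hs => hs.1

/-- Iterated application `∃x̄ X`. -/
def Team.eexistsN (l : List ℕ) (X : Team α) : Team α := l.foldr Team.eexists X

/-- Iterated application `∀x̄ X`. -/
def Team.eforallN (l : List ℕ) (X : Team α) : Team α := l.foldr Team.eforall X

/-- Restriction of an assignment to a finite set of variables (default outside). -/
def restrictFun (d : Finset ℕ) (s : ℕ → α) : ℕ → α := fun y => if y ∈ d then s y else default

/-- The restriction `X ↾ V` of a team, with domain `dom(X) ∩ V`. -/
def Team.restrict (X : Team α) (V : Finset ℕ) : Team α where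
  dom := X.dom ∩ V
  assignments := {t | ∃ s ∈ X.assignments, t = restrictFun (X.dom ∩ V) s}
  supported := by rintro t ⟨s, _, rfl⟩ y hy; simp only [restrictFun]; exact if_neg hy

/-- The full team on a domain `d`: all (supported) assignments. -/
def Team.full (α : Type) [Inhabited α] (d : Finset ℕ) : Team α where
  dom := d
  assignments := {s | ∀ y ∉ d, s y = default}
  supported := fun _ hs => hs

/-- The complement team `X^c`: all assignments with domain `dom(X)` not in `X`. -/
def Team.compl (X : Team α) : Team α where
  dom := X.dom
  assignments := {s | (∀ y ∉ X.dom, s y = default) ∧ s ∉ X.assignments}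
  supported := fun _ hs => hs.1

/-- Union of two teams. -/
def Team.unionT (X Y : Team α) : Team α where
  dom := X.dom ∪ Y.dom
  assignments := X.assignments ∪ Y.assignments
  supported := by
    rintro s (hs | hs) y hy
    · exact X.supported s hs y (fun h => hy (Finset.mem_union_left _ h))
    · exact Y.supported s hs y (fun h => hy (Finset.mem_union_right _ h))

/-- The team `X[M/x] = {s[a/x] | s ∈ X, a ∈ M}`. -/
def Team.subM (X : Team α) (x : ℕ) : Team α where
  dom := insert x X.dom
  assignments := {t | ∃ s ∈ X.assignments, ∃ a : α, t = Function.update s x a}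
  supported := by
    rintro t ⟨s, hs, a, rfl⟩ y hy
    have hyx : y ≠ x := fun h => hy (h ▸ Finset.mem_insert_self x X.dom)
    rw [Function.update_of_ne hyx]
    exact X.supported s hs y (fun h => hy (Finset.mem_insert_of_mem h))

/-- The team `X[f/x] = {s[f(s)/x] | s ∈ X}` for `f : X → M`. -/
def Team.subf (X : Team α) (x : ℕ) (f : (ℕ → α) → α) : Team α where
  dom := insert x X.dom
  assignments := {t | ∃ s ∈ X.assignments, t = Function.update s x (f s)}
  supported := by
    rintro t ⟨s, hs, rfl⟩ y hy
    have hyx : y ≠ x := fun h => hy (h ▸ Finset.mem_insert_self x X.dom)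
    rw [Function.update_of_ne hyx]
    exact X.supported s hs y (fun h => hy (Finset.mem_insert_of_mem h))

/-- The team `X[F/x] = {s[a/x] | s ∈ X, a ∈ F(s)}` for `F : X → P(M)`. -/
def Team.subF (X : Team α) (x : ℕ) (F : (ℕ → α) → Set α) : Team α where
  dom := insert x X.dom
  assignments := {t | ∃ s ∈ X.assignments, ∃ a ∈ F s, t = Function.update s x a}
  supported := by
    rintro t ⟨s, hs, a, _, rfl⟩ y hy
    have hyx : y ≠ x := fun h => hy (h ▸ Finset.mem_insert_self x X.dom)
    rw [Function.update_of_ne hyx]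
    exact X.supported s hs y (fun h => hy (Finset.mem_insert_of_mem h))

/-- Simultaneous update `s[v̄/x̄]` of an assignment along a list of variables. -/
def updVec (s : ℕ → α) (l : List ℕ) (v : Fin l.length → α) : ℕ → α :=
  fun y => if h : y ∈ l then v ⟨l.idxOf y, List.idxOf_lt_length_iff.mpr h⟩ else s y

theorem updVec_not_mem (s : ℕ → α) (l : List ℕ) (v : Fin l.length → α) {y : ℕ} (h : y ∉ l) :
    updVec s l v y = s y := dif_neg h

/-- The team `X[M/x̄]`. -/
def Team.subMVec (X : Team α) (l : List ℕ) : Team α where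
  dom := X.dom ∪ l.toFinset
  assignments := {t | ∃ s ∈ X.assignments, ∃ v : Fin l.length → α, t = updVec s l v}
  supported := by
    rintro t ⟨s, hs, v, rfl⟩ y hy
    rw [updVec_not_mem s l v (fun h => hy (Finset.mem_union_right _ (List.mem_toFinset.mpr h)))]
    exact X.supported s hs y (fun h => hy (Finset.mem_union_left _ h))

/-- The team `X[F/x̄] = {s[ā/x̄] | s ∈ X, ā ∈ F(s)}` for a set-valued `F`. -/
def Team.subFVec (X : Team α) (l : List ℕ) (F : (ℕ → α) → Set (Fin l.length → α)) :
    Team α where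
  dom := X.dom ∪ l.toFinset
  assignments := {t | ∃ s ∈ X.assignments, ∃ v ∈ F s, t = updVec s l v}
  supported := by
    rintro t ⟨s, hs, v, _, rfl⟩ y hy
    rw [updVec_not_mem s l v (fun h => hy (Finset.mem_union_right _ (List.mem_toFinset.mpr h)))]
    exact X.supported s hs y (fun h => hy (Finset.mem_union_left _ h))

/-- The team `Qx̄ Y = {s : dom(Y)∖{x̄} → M | Y_s(x̄) ∈ Q_M}` for a (local) generalized
quantifier `Q_M` of type `⟨k⟩` where `k` is the length of `x̄`. -/
def Team.qapp (l : List ℕ) (QM : Set (Set (Fin l.length → α))) (Y : Team α) : Team α where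
  dom := Y.dom \ l.toFinset
  assignments := {s | (∀ y ∉ Y.dom \ l.toFinset, s y = default) ∧
    {v : Fin l.length → α | updVec s l v ∈ Y.assignments} ∈ QM}
  supported := fun _ hs => hs.1

/-- `Qx Y` for a (local) generalized quantifier of type `⟨1⟩`. -/
def Team.q1app (x : ℕ) (QM : Set (Set α)) (Y : Team α) : Team α where
  dom := Y.dom.erase x
  assignments := {s | (∀ y ∉ Y.dom.erase x, s y = default) ∧
    {a : α | Function.update s x a ∈ Y.assignments} ∈ QM}
  supported := fun _ hs => hs.1

/-- The team `{ε}` consisting of just the empty assignment. -/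
def epsTeam (α : Type) [Inhabited α] : Team α where
  dom := ∅
  assignments := {fun _ => default}
  supported := by rintro s rfl y _; rfl

/-- `rel(X) ⊆ M^n`: the relation corresponding to a team, with `dom(X)` enumerated in
increasing order. -/
def Team.relSetN (X : Team α) (n : ℕ) (h : X.dom.card = n) : Set (Fin n → α) :=
  {v | ∃ s ∈ X.assignments, ∀ i, v i = s (X.dom.orderEmbOfFin h i)}

end Paper

namespace Paper

/-- Formulas of dependence logic (in negation normal form): literals, dependence atoms
`dep(t₁,…,tₙ,t)`, internal connectives `⩓`/`⩔`, and quantifiers. -/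
inductive DForm (σ : Sig) where
  | rel : (r : σ.Rel) → (Fin (σ.arR r) → Term σ) → DForm σ
  | nrel : (r : σ.Rel) → (Fin (σ.arR r) → Term σ) → DForm σ
  | eq : Term σ → Term σ → DForm σ
  | neq : Term σ → Term σ → DForm σ
  | dep : List (Term σ) → Term σ → DForm σ
  | iand : DForm σ → DForm σ → DForm σ
  | ior : DForm σ → DForm σ → DForm σ
  | ex : ℕ → DForm σ → DForm σ
  | all : ℕ → DForm σ → DForm σ

variable {σ : Sig} {α : Type} [Inhabited α]

/-- Free variables of a dependence logic formula. -/
def DForm.fv : DForm σ → Finset ℕ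
  | .rel _ ts | .nrel _ ts => Finset.univ.biUnion fun i => (ts i).fv
  | .eq t u | .neq t u => t.fv ∪ u.fv
  | .dep ts t => ts.foldr (fun u acc => u.fv ∪ acc) t.fv
  | .iand φ ψ | .ior φ ψ => φ.fv ∪ ψ.fv
  | .ex x φ | .all x φ => φ.fv.erase x

/-- Team satisfaction for dependence logic. -/
def DSat (𝕄 : Struc σ α) : DForm σ → Team α → Prop
  | .rel r ts, X => ∀ s ∈ X.assignments, 𝕄.interpR r fun i => (ts i).eval 𝕄 s
  | .nrel r ts, X => ∀ s ∈ X.assignments, ¬ 𝕄.interpR r fun i => (ts i).eval 𝕄 s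
  | .eq t u, X => ∀ s ∈ X.assignments, t.eval 𝕄 s = u.eval 𝕄 s
  | .neq t u, X => ∀ s ∈ X.assignments, t.eval 𝕄 s ≠ u.eval 𝕄 s
  | .dep ts t, X => ∀ s ∈ X.assignments, ∀ s' ∈ X.assignments,
      (∀ u ∈ ts, u.eval 𝕄 s = u.eval 𝕄 s') → t.eval 𝕄 s = t.eval 𝕄 s'
  | .iand φ ψ, X => ∃ Y Z : Team α, Y.dom = X.dom ∧ Z.dom = X.dom ∧
      X.assignments = Y.assignments ∩ Z.assignments ∧ DSat 𝕄 φ Y ∧ DSat 𝕄 ψ Z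
  | .ior φ ψ, X => ∃ Y Z : Team α, Y.dom = X.dom ∧ Z.dom = X.dom ∧
      X.assignments = Y.assignments ∪ Z.assignments ∧ DSat 𝕄 φ Y ∧ DSat 𝕄 ψ Z
  | .ex x φ, X => ∃ Y : Team α, x ∈ Y.dom ∧ Team.eexists x Y = Team.eexists x X ∧ DSat 𝕄 φ Y
  | .all x φ, X => ∃ Y : Team α, x ∈ Y.dom ∧ Team.eforall x Y = Team.eexists x X ∧ DSat 𝕄 φ Y

end Paper

/-!
Dependence logic is downward closed: satisfaction passes to subteams with the same domain.
If `∀x Y = ∃x X` with `x ∈ dom(Y)`, then every `s[a/x]` with `s ∈ X` lies in `Y`, so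
`X[M/x]` is a subteam of `Y` and inherits `φ` from it. Conversely `∀x (X[M/x]) = ∃x X`, so
`X[M/x]` is itself a witness for `∀x φ`.
-/

namespace Paper

variable {σ : Sig} {α : Type} [Inhabited α]

theorem exists_update_update_mem_iff {ι β : Type*} [DecidableEq ι] (S : Set (ι → β)) (x : ι)
    (t : ι → β) (b : β) :
    (∃ a, Function.update (Function.update t x b) x a ∈ S) ↔
      ∃ a, Function.update t x a ∈ S := by
  simp only [Function.update_idem]

theorem Team.ext {X Y : Team α} (hdom : X.dom = Y.dom)
    (hassign : X.assignments = Y.assignments) : X = Y := by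
  cases X; cases Y; cases hdom; cases hassign; rfl

def Team.filter (X : Team α) (p : (ℕ → α) → Prop) : Team α where
  dom := X.dom
  assignments := {s | s ∈ X.assignments ∧ p s}
  supported := fun s hs => X.supported s hs.1

theorem Team.eexists_filter {p : (ℕ → α) → Prop} (x : ℕ)
    (hp : ∀ t a, p (Function.update t x a) ↔ p t) (W : Team α) :
    (W.filter p).eexists x = (W.eexists x).filter p := by
  refine Team.ext rfl (Set.ext fun s => ?_)
  simp only [Team.eexists, Team.filter, Set.mem_ofPred_eq, hp]
  tauto

theorem Team.eforall_filter {p : (ℕ → α) → Prop} (x : ℕ)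
    (hp : ∀ t a, p (Function.update t x a) ↔ p t) (W : Team α) :
    (W.filter p).eforall x = (W.eforall x).filter p := by
  refine Team.ext rfl (Set.ext fun s => ?_)
  simp only [Team.eforall, Team.filter, Set.mem_ofPred_eq, hp]
  split_ifs
  · exact ⟨fun h => ⟨⟨h.1, fun a => (h.2 a).1⟩, (h.2 default).2⟩,
      fun h => ⟨h.1.1, fun a => ⟨h.1.2 a, h.2⟩⟩⟩
  · tauto

theorem Team.eexists_filter_eq_eexists {X Y : Team α} (x : ℕ) (hdom : Y.dom = X.dom)
    (hsub : Y.assignments ⊆ X.assignments) :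
    (X.eexists x).filter (fun t => ∃ a, Function.update t x a ∈ Y.assignments) =
      Y.eexists x := by
  refine Team.ext (by simp [Team.filter, Team.eexists, hdom]) (Set.ext fun s => ?_)
  simp only [Team.eexists, Team.filter, Set.mem_ofPred_eq, hdom]
  exact ⟨fun h => ⟨h.1.1, h.2⟩, fun h => ⟨⟨h.1, h.2.imp fun _ ha => hsub ha⟩, h.2⟩⟩

theorem DSat.of_subset {𝕄 : Struc σ α} {φ : DForm σ} {X Y : Team α} (h : DSat 𝕄 φ X)
    (hdom : Y.dom = X.dom) (hsub : Y.assignments ⊆ X.assignments) : DSat 𝕄 φ Y := by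
  induction φ generalizing X Y with
  | rel | nrel | eq | neq => exact fun s hs => h s (hsub hs)
  | dep => exact fun s hs s' hs' => h s (hsub hs) s' (hsub hs')
  | iand φ ψ ihφ ihψ =>
    obtain ⟨A, B, hA, hB, hX, hφ, hψ⟩ := h
    rw [hX] at hsub
    exact ⟨Y, Y, rfl, rfl, (Set.inter_self _).symm,
      ihφ hφ (hdom.trans hA.symm) fun _ hs => (hsub hs).1,
      ihψ hψ (hdom.trans hB.symm) fun _ hs => (hsub hs).2⟩
  | ior φ ψ ihφ ihψ =>
    obtain ⟨A, B, hA, hB, hX, hφ, hψ⟩ := h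
    rw [hX] at hsub
    refine ⟨A.filter (· ∈ Y.assignments), B.filter (· ∈ Y.assignments),
      hA.trans hdom.symm, hB.trans hdom.symm, ?_,
      ihφ hφ rfl fun _ hs => hs.1, ihψ hψ rfl fun _ hs => hs.1⟩
    ext s
    simp only [Team.filter, Set.mem_union, Set.mem_ofPred_eq]
    exact ⟨fun hs => (hsub hs).imp (⟨·, hs⟩) (⟨·, hs⟩),
      fun hs => hs.elim (·.2) (·.2)⟩
  -- Keep only the assignments of the witness whose `x`-fibre meets `Y`.
  | ex x φ ih =>
    obtain ⟨W, hxW, hW, hφ⟩ := h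
    refine ⟨W.filter fun t => ∃ a, Function.update t x a ∈ Y.assignments, hxW, ?_,
      ih hφ rfl fun _ hs => hs.1⟩
    rw [Team.eexists_filter x (exists_update_update_mem_iff _ x), hW,
      Team.eexists_filter_eq_eexists x hdom hsub]
  | all x φ ih =>
    obtain ⟨W, hxW, hW, hφ⟩ := h
    refine ⟨W.filter fun t => ∃ a, Function.update t x a ∈ Y.assignments, hxW, ?_,
      ih hφ rfl fun _ hs => hs.1⟩
    rw [Team.eforall_filter x (exists_update_update_mem_iff _ x), hW,
      Team.eexists_filter_eq_eexists x hdom hsub]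

theorem Team.update_default_mem_eexists {X : Team α} {s : ℕ → α} (hs : s ∈ X.assignments)
    (x : ℕ) : Function.update s x default ∈ (X.eexists x).assignments := by
  refine ⟨fun y hy => ?_, s x, by rwa [Function.update_idem, Function.update_eq_self]⟩
  rcases eq_or_ne y x with rfl | hne
  · exact Function.update_self _ _ _
  · rw [Function.update_of_ne hne]
    exact X.supported s hs y fun h => hy (Finset.mem_erase.mpr ⟨hne, h⟩)

theorem Team.eforall_subM (X : Team α) (x : ℕ) : (X.subM x).eforall x = X.eexists x := by
  have hdom : (insert x X.dom).erase x = X.dom.erase x := Finset.erase_insert_eq_erase _ _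
  refine Team.ext hdom (Set.ext fun s => ?_)
  simp only [Team.eforall, Team.eexists, Team.subM, Set.mem_ofPred_eq, hdom,
    Finset.mem_insert_self, if_true]
  refine and_congr_right fun _ => ⟨fun h => ?_, fun ⟨a, ha⟩ b => ⟨_, ha, b, ?_⟩⟩
  · obtain ⟨t, ht, b, heq⟩ := h default
    refine ⟨t x, ?_⟩
    convert ht using 1
    funext y
    rcases eq_or_ne y x with rfl | hne
    · exact Function.update_self _ _ _
    · simpa [Function.update_of_ne hne] using congrFun heq y
  · rw [Function.update_idem]

theorem Team.subM_dom_eq_of_eforall_eq {X Y : Team α} {x : ℕ} (hxY : x ∈ Y.dom)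
    (hY : Y.eforall x = X.eexists x) : (X.subM x).dom = Y.dom := by
  have hdom : Y.dom.erase x = X.dom.erase x := congrArg Team.dom hY
  rw [← Finset.insert_erase hxY, hdom, ← Finset.erase_insert_eq_erase,
    Finset.insert_erase (Finset.mem_insert_self x X.dom)]
  rfl

theorem Team.subM_subset_of_eforall_eq {X Y : Team α} {x : ℕ} (hxY : x ∈ Y.dom)
    (hY : Y.eforall x = X.eexists x) : (X.subM x).assignments ⊆ Y.assignments := by
  rintro _ ⟨s, hs, a, rfl⟩
  have hmem := Team.update_default_mem_eexists hs x
  rw [← hY] at hmem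
  have hall : ∀ b, Function.update (Function.update s x default) x b ∈ Y.assignments := by
    simpa [Team.eforall, hxY] using hmem.2
  simpa only [Function.update_idem] using hall a

theorem dsat_all_iff_general {σ : Sig} {α : Type} [Inhabited α] (𝕄 : Struc σ α)
    (φ : DForm σ) (x : ℕ) (X : Team α) :
    DSat 𝕄 (DForm.all x φ) X ↔ DSat 𝕄 φ (X.subM x) := by
  constructor
  · rintro ⟨Y, hxY, hY, hφ⟩
    exact hφ.of_subset (Team.subM_dom_eq_of_eforall_eq hxY hY)
      (Team.subM_subset_of_eforall_eq hxY hY)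
  · exact fun hφ => ⟨X.subM x, Finset.mem_insert_self x X.dom, X.eforall_subM x, hφ⟩

/-- `M,X ⊨_D ∀x φ` iff `M,X[M/x] ⊨_D φ`, for every dependence logic
formula `φ` with `FV(∀x φ) ⊆ dom(X)`. -/
theorem dsat_all_iff {σ : Sig} {α : Type} [Inhabited α] (𝕄 : Struc σ α)
    (φ : DForm σ) (x : ℕ) (X : Team α) (hfv : (DForm.all x φ).fv ⊆ X.dom) :
    DSat 𝕄 (DForm.all x φ) X ↔ DSat 𝕄 φ (X.subM x) :=
  dsat_all_iff_general 𝕄 φ x X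

end Paper
end

section
/- Conservativity over FO(Q): for every untangled formula φ of first-order logic extended with a generalized quantifier Q, and every team X such that dom(X) ∩ BV(φ) = ∅ and FV(φ) ⊆ dom(X): M,X ⊨_mt φ if and only if X = ⟦φ⟧^M_{dom(X)}, where ⟦φ⟧^M_{x̄} = {s : {x̄} → M | M,s ⊨ φ} with ⊨ the standard Tarskian/Lindström satisfaction for FO(Q). -/
set_option linter.unusedSectionVars false

namespace Paper

/-- Formulas of first-order logic extended with a generalized quantifier `Q` of type
`⟨1⟩` (in negation normal form, viewed inside mt-logic, so with the internal
connectives `⩓`/`⩔`). -/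
inductive QForm (σ : Sig) where
  | rel : (r : σ.Rel) → (Fin (σ.arR r) → Term σ) → QForm σ
  | nrel : (r : σ.Rel) → (Fin (σ.arR r) → Term σ) → QForm σ
  | eq : Term σ → Term σ → QForm σ
  | neq : Term σ → Term σ → QForm σ
  | iand : QForm σ → QForm σ → QForm σ
  | ior : QForm σ → QForm σ → QForm σ
  | ex : ℕ → QForm σ → QForm σ
  | all : ℕ → QForm σ → QForm σ
  | qu : ℕ → QForm σ → QForm σ

variable {σ : Sig} {α : Type} [Inhabited α]

/-- Free variables. -/
def QForm.fv : QForm σ → Finset ℕ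
  | .rel _ ts | .nrel _ ts => Finset.univ.biUnion fun i => (ts i).fv
  | .eq t u | .neq t u => t.fv ∪ u.fv
  | .iand φ ψ | .ior φ ψ => φ.fv ∪ ψ.fv
  | .ex x φ | .all x φ | .qu x φ => φ.fv.erase x

/-- Bound variables. -/
def QForm.bv : QForm σ → Finset ℕ
  | .rel _ _ | .nrel _ _ | .eq _ _ | .neq _ _ => ∅
  | .iand φ ψ | .ior φ ψ => φ.bv ∪ ψ.bv
  | .ex x φ | .all x φ | .qu x φ => insert x φ.bv

/-- No quantifier (including `Q`) binding `x` occurs in the scope of another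
quantifier binding `x`. -/
def QForm.noRebind : QForm σ → Prop
  | .rel _ _ | .nrel _ _ | .eq _ _ | .neq _ _ => True
  | .iand φ ψ | .ior φ ψ => φ.noRebind ∧ ψ.noRebind
  | .ex x φ | .all x φ | .qu x φ => x ∉ φ.bv ∧ φ.noRebind

/-- A formula is untangled if no quantifier `Qx` appears in the scope of another
quantifier `Q'x` and no variable is both free and bound. -/
def QForm.untangled (φ : QForm σ) : Prop := φ.noRebind ∧ Disjoint φ.fv φ.bv

/-- Standard Tarskian/Lindström satisfaction for `FO(Q)`, where the local quantifier
`Q_M` is given by `QM`. -/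
def QForm.tsat (𝕄 : Struc σ α) (QM : Set (Set α)) : (ℕ → α) → QForm σ → Prop
  | s, .rel r ts => 𝕄.interpR r fun i => (ts i).eval 𝕄 s
  | s, .nrel r ts => ¬ 𝕄.interpR r fun i => (ts i).eval 𝕄 s
  | s, .eq t u => t.eval 𝕄 s = u.eval 𝕄 s
  | s, .neq t u => t.eval 𝕄 s ≠ u.eval 𝕄 s
  | s, .iand φ ψ => φ.tsat 𝕄 QM s ∧ ψ.tsat 𝕄 QM s
  | s, .ior φ ψ => φ.tsat 𝕄 QM s ∨ ψ.tsat 𝕄 QM s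
  | s, .ex x φ => ∃ a : α, φ.tsat 𝕄 QM (Function.update s x a)
  | s, .all x φ => ∀ a : α, φ.tsat 𝕄 QM (Function.update s x a)
  | s, .qu x φ => {a : α | φ.tsat 𝕄 QM (Function.update s x a)} ∈ QM

/-- The semantic value `⟦φ⟧^𝕄_{d}` of an `FO(Q)` formula. -/
def SemValQ (𝕄 : Struc σ α) (QM : Set (Set α)) (d : Finset ℕ) (φ : QForm σ) : Team α where
  dom := d
  assignments := {s | (∀ y ∉ d, s y = default) ∧ φ.tsat 𝕄 QM s}
  supported := fun _ hs => hs.1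

/-- Team satisfaction for mt-logic extended with the generalized quantifier `Q`. -/
def QSat (𝕄 : Struc σ α) (QM : Set (Set α)) : QForm σ → Team α → Prop
  | .rel r ts, X => ∀ s : ℕ → α, (∀ y ∉ X.dom, s y = default) →
      (s ∈ X.assignments ↔ 𝕄.interpR r fun i => (ts i).eval 𝕄 s)
  | .nrel r ts, X => ∀ s : ℕ → α, (∀ y ∉ X.dom, s y = default) →
      (s ∈ X.assignments ↔ ¬ 𝕄.interpR r fun i => (ts i).eval 𝕄 s)
  | .eq t u, X => ∀ s : ℕ → α, (∀ y ∉ X.dom, s y = default) →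
      (s ∈ X.assignments ↔ t.eval 𝕄 s = u.eval 𝕄 s)
  | .neq t u, X => ∀ s : ℕ → α, (∀ y ∉ X.dom, s y = default) →
      (s ∈ X.assignments ↔ t.eval 𝕄 s ≠ u.eval 𝕄 s)
  | .iand φ ψ, X => ∃ Y Z : Team α, Y.dom = X.dom ∧ Z.dom = X.dom ∧
      X.assignments = Y.assignments ∩ Z.assignments ∧ QSat 𝕄 QM φ Y ∧ QSat 𝕄 QM ψ Z
  | .ior φ ψ, X => ∃ Y Z : Team α, Y.dom = X.dom ∧ Z.dom = X.dom ∧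
      X.assignments = Y.assignments ∪ Z.assignments ∧ QSat 𝕄 QM φ Y ∧ QSat 𝕄 QM ψ Z
  | .ex x φ, X => ∃ Y : Team α, x ∈ Y.dom ∧ Team.eexists x Y = Team.eexists x X ∧
      QSat 𝕄 QM φ Y
  | .all x φ, X => ∃ Y : Team α, x ∈ Y.dom ∧ Team.eforall x Y = Team.eexists x X ∧
      QSat 𝕄 QM φ Y
  | .qu x φ, X => ∃ Y : Team α, x ∈ Y.dom ∧ QSat 𝕄 QM φ Y ∧
      Team.eexists x X = Team.q1app x QM Y

/-! Induction on `φ`, with the domain of the team as a parameter. Each connective of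
mt-logic acts on the semantic values of its immediate subformulas as the corresponding
Tarskian clause acts on assignments: `⩓` and `⩔` by intersection and union, `∃x`, `∀x`
and `Qx` through `Team.eexists`, `Team.eforall` and `Team.q1app`. Since `dom(X)` avoids
the bound variables, the quantified variable `x` is fresh for `dom(X)`; hence `∃x X = X`,
any witness team `Y` has domain `dom(X) ∪ {x}`, and the induction hypothesis forces
`Y = ⟦φ⟧_{dom(X) ∪ {x}}`. -/

attribute [ext] Team

theorem Team.eexists_of_notMem {X : Team α} {x : ℕ} (hx : x ∉ X.dom) : X.eexists x = X := by
  refine Team.ext (Finset.erase_eq_of_notMem hx) (Set.ext fun s => ?_)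
  simp only [Team.eexists, Finset.erase_eq_of_notMem hx, Set.mem_ofPred_eq]
  constructor
  · rintro ⟨hs, a, ha⟩
    have ha_eq : a = s x := by
      rw [hs x hx, ← X.supported _ ha x hx, Function.update_self]
    rwa [ha_eq, Function.update_eq_self] at ha
  · exact fun hs => ⟨X.supported s hs, s x, by rwa [Function.update_eq_self]⟩

section SemValQ

variable {𝕄 : Struc σ α} {QM : Set (Set α)} {φ ψ : QForm σ} {d : Finset ℕ}

theorem eq_semValQ_iff {X : Team α} :
    X = SemValQ 𝕄 QM X.dom φ ↔
      ∀ s : ℕ → α, (∀ y ∉ X.dom, s y = default) → (s ∈ X.assignments ↔ φ.tsat 𝕄 QM s) := by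
  refine ⟨fun h s hs => ?_, fun h => Team.ext rfl (Set.ext fun s => ?_)⟩
  · rw [h]
    exact and_iff_right hs
  · exact ⟨fun hs => ⟨X.supported s hs, (h s (X.supported s hs)).1 hs⟩,
      fun hs => (h s hs.1).2 hs.2⟩

theorem eq_semValQ_iff_assignments {X : Team α} :
    X = SemValQ 𝕄 QM X.dom φ ↔ X.assignments = (SemValQ 𝕄 QM X.dom φ).assignments :=
  ⟨congrArg Team.assignments, Team.ext rfl⟩

theorem semValQ_iand_assignments :
    (SemValQ 𝕄 QM d (.iand φ ψ)).assignments =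
      (SemValQ 𝕄 QM d φ).assignments ∩ (SemValQ 𝕄 QM d ψ).assignments := by
  ext s
  simp only [SemValQ, QForm.tsat, Set.mem_inter_iff, Set.mem_ofPred_eq]
  tauto

theorem semValQ_ior_assignments :
    (SemValQ 𝕄 QM d (.ior φ ψ)).assignments =
      (SemValQ 𝕄 QM d φ).assignments ∪ (SemValQ 𝕄 QM d ψ).assignments := by
  ext s
  simp only [SemValQ, QForm.tsat, Set.mem_union, Set.mem_ofPred_eq]
  tauto

theorem update_mem_semValQ_iff {x : ℕ} {s : ℕ → α} (hs : ∀ y ∉ d, s y = default) (a : α) :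
    Function.update s x a ∈ (SemValQ 𝕄 QM (insert x d) φ).assignments ↔
      φ.tsat 𝕄 QM (Function.update s x a) := by
  refine and_iff_right fun y hy => ?_
  rw [Finset.mem_insert, not_or] at hy
  rw [Function.update_of_ne hy.1]
  exact hs y hy.2

variable {x : ℕ}

theorem eexists_semValQ (hx : x ∉ d) :
    (SemValQ 𝕄 QM (insert x d) φ).eexists x = SemValQ 𝕄 QM d (.ex x φ) := by
  refine Team.ext (Finset.erase_insert hx) (Set.ext fun s => ?_)
  simp only [Team.eexists, SemValQ, QForm.tsat, Finset.erase_insert hx, Set.mem_ofPred_eq]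
  exact and_congr_right fun hs => exists_congr (update_mem_semValQ_iff hs)

theorem eforall_semValQ (hx : x ∉ d) :
    (SemValQ 𝕄 QM (insert x d) φ).eforall x = SemValQ 𝕄 QM d (.all x φ) := by
  refine Team.ext (Finset.erase_insert hx) (Set.ext fun s => ?_)
  simp only [Team.eforall, SemValQ, QForm.tsat, Finset.erase_insert hx, Set.mem_ofPred_eq,
    Finset.mem_insert_self, if_true]
  exact and_congr_right fun hs => forall_congr' (update_mem_semValQ_iff hs)

theorem q1app_semValQ (hx : x ∉ d) :
    (SemValQ 𝕄 QM (insert x d) φ).q1app x QM = SemValQ 𝕄 QM d (.qu x φ) := by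
  refine Team.ext (Finset.erase_insert hx) (Set.ext fun s => ?_)
  simp only [Team.q1app, SemValQ, QForm.tsat, Finset.erase_insert hx, Set.mem_ofPred_eq]
  exact and_congr_right fun hs =>
    Eq.to_iff (congrArg (· ∈ QM) (Set.ext (update_mem_semValQ_iff hs)))

end SemValQ

def QForm.Admissible (d : Finset ℕ) (φ : QForm σ) : Prop :=
  φ.untangled ∧ Disjoint d φ.bv ∧ φ.fv ⊆ d

section Admissible

variable {φ ψ : QForm σ} {d : Finset ℕ} {x : ℕ}

theorem QForm.Admissible.of_iand (h : (QForm.iand φ ψ).Admissible d) :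
    φ.Admissible d ∧ ψ.Admissible d := by
  obtain ⟨⟨⟨hφ, hψ⟩, hdisj⟩, hbv, hfv⟩ := h
  simp only [QForm.fv, QForm.bv, Finset.disjoint_union_left, Finset.disjoint_union_right,
    Finset.union_subset_iff] at hdisj hbv hfv
  exact ⟨⟨⟨hφ, hdisj.1.1⟩, hbv.1, hfv.1⟩, ⟨hψ, hdisj.2.2⟩, hbv.2, hfv.2⟩

theorem QForm.Admissible.of_ior (h : (QForm.ior φ ψ).Admissible d) :
    φ.Admissible d ∧ ψ.Admissible d :=
  QForm.Admissible.of_iand h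

theorem QForm.Admissible.of_ex (h : (QForm.ex x φ).Admissible d) :
    x ∉ d ∧ φ.Admissible (insert x d) := by
  obtain ⟨⟨⟨hx, hφ⟩, hdisj⟩, hbv, hfv⟩ := h
  rw [QForm.fv, QForm.bv, Finset.disjoint_insert_right] at hdisj
  rw [QForm.bv, Finset.disjoint_insert_right] at hbv
  have hfv_sub := Finset.insert_erase_subset x φ.fv
  refine ⟨hbv.1, ⟨hφ, ?_⟩, Finset.disjoint_insert_left.2 ⟨hx, hbv.2⟩,
    hfv_sub.trans (Finset.insert_subset_insert x hfv)⟩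
  exact (Finset.disjoint_insert_left.2 ⟨hx, hdisj.2⟩).mono_left hfv_sub

theorem QForm.Admissible.of_all (h : (QForm.all x φ).Admissible d) :
    x ∉ d ∧ φ.Admissible (insert x d) :=
  QForm.Admissible.of_ex h

theorem QForm.Admissible.of_qu (h : (QForm.qu x φ).Admissible d) :
    x ∉ d ∧ φ.Admissible (insert x d) :=
  QForm.Admissible.of_ex h

end Admissible

section Decomposition

variable {X A B : Team α}

theorem Team.exists_split_iff {P R : Team α → Prop}
    (op : Set (ℕ → α) → Set (ℕ → α) → Set (ℕ → α)) (hA : A.dom = X.dom) (hB : B.dom = X.dom)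
    (hP : ∀ Y : Team α, Y.dom = X.dom → (P Y ↔ Y = A))
    (hR : ∀ Z : Team α, Z.dom = X.dom → (R Z ↔ Z = B)) :
    (∃ Y Z : Team α, Y.dom = X.dom ∧ Z.dom = X.dom ∧
      X.assignments = op Y.assignments Z.assignments ∧ P Y ∧ R Z) ↔
      X.assignments = op A.assignments B.assignments := by
  constructor
  · rintro ⟨Y, Z, hY, hZ, hX, hPY, hRZ⟩
    rwa [(hP Y hY).1 hPY, (hR Z hZ).1 hRZ] at hX
  · exact fun hX => ⟨A, B, hA, hB, hX, (hP A hA).2 rfl, (hR B hB).2 rfl⟩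

theorem Team.exists_extension_iff {x : ℕ} {P : Team α → Prop} (op : Team α → Team α)
    (hop : ∀ Y, (op Y).dom = Y.dom.erase x) (hA : A.dom = insert x X.dom)
    (hP : ∀ Y : Team α, Y.dom = insert x X.dom → (P Y ↔ Y = A)) :
    (∃ Y : Team α, x ∈ Y.dom ∧ op Y = X ∧ P Y) ↔ X = op A := by
  constructor
  · rintro ⟨Y, hxY, rfl, hPY⟩
    have hY : Y.dom = insert x (op Y).dom := by rw [hop, Finset.insert_erase hxY]
    rw [← (hP Y hY).1 hPY]
  · rintro rfl
    exact ⟨A, hA ▸ Finset.mem_insert_self x _, rfl, (hP A hA).2 rfl⟩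

end Decomposition

/-- STATEMENT 16 (Conservativity over `FO(Q)`): for every untangled formula `φ` of
first-order logic extended with a generalized quantifier `Q` and every team `X` such
that `dom(X) ∩ BV(φ) = ∅` and `FV(φ) ⊆ dom(X)`: `M,X ⊨_mt φ` iff
`X = ⟦φ⟧^M_{dom(X)}`. -/
theorem qsat_untangled (𝕄 : Struc σ α) (QM : Set (Set α)) (φ : QForm σ) (X : Team α)
    (hUnt : φ.untangled) (hBV : Disjoint X.dom φ.bv) (hfv : φ.fv ⊆ X.dom) :
    QSat 𝕄 QM φ X ↔ X = SemValQ 𝕄 QM X.dom φ := by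
  suffices h : ∀ d, φ.Admissible d → ∀ Y : Team α, Y.dom = d →
      (QSat 𝕄 QM φ Y ↔ Y = SemValQ 𝕄 QM d φ) from h X.dom ⟨hUnt, hBV, hfv⟩ X rfl
  clear hUnt hBV hfv
  induction φ with
  | rel | nrel | eq | neq => rintro d - Y rfl; rw [eq_semValQ_iff]; rfl
  | iand φ ψ ihφ ihψ =>
    rintro d h Y rfl
    obtain ⟨hφ, hψ⟩ := h.of_iand
    rw [eq_semValQ_iff_assignments, semValQ_iand_assignments]
    exact Team.exists_split_iff (· ∩ ·) rfl rfl (ihφ _ hφ) (ihψ _ hψ)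
  | ior φ ψ ihφ ihψ =>
    rintro d h Y rfl
    obtain ⟨hφ, hψ⟩ := h.of_ior
    rw [eq_semValQ_iff_assignments, semValQ_ior_assignments]
    exact Team.exists_split_iff (· ∪ ·) rfl rfl (ihφ _ hφ) (ihψ _ hψ)
  | ex x φ ih =>
    rintro d h Y rfl
    obtain ⟨hx, hφ⟩ := h.of_ex
    rw [QSat, Team.eexists_of_notMem hx, ← eexists_semValQ hx]
    exact Team.exists_extension_iff _ (fun _ => rfl) rfl (ih _ hφ)
  | all x φ ih =>
    rintro d h Y rfl
    obtain ⟨hx, hφ⟩ := h.of_all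
    rw [QSat, Team.eexists_of_notMem hx, ← eforall_semValQ hx]
    exact Team.exists_extension_iff _ (fun _ => rfl) rfl (ih _ hφ)
  | qu x φ ih =>
    rintro d h Y rfl
    obtain ⟨hx, hφ⟩ := h.of_qu
    rw [QSat, Team.eexists_of_notMem hx, ← q1app_semValQ hx]
    simpa only [and_comm, eq_comm] using Team.exists_extension_iff _ (fun _ => rfl) rfl (ih _ hφ)

end Paper
end
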